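/- If n is even, k divides n, and k < n, then the path P_{2k} with 2k edges divides Q_n. -/

import Mathlib

/-!
Write `n = m * k` with `m ≥ 2` and split the coordinates into `m` blocks of size `k`. For a block
index `j` (mod `m`) and a start vertex `g`, flipping the coordinates of block `j` and then those of
block `j + 1`, in a fixed order, traces a path with `2k` edges. An edge in a direction `d` of block
`j` lies on exactly four of these paths: two of type `j` and two of type `j - 1`, with start
vertices `y`, `y + e_d`, `y + σ`, `y + σ + e_d`, where `σ` is the indicator vector of block `j - 1`.
If `Φ` is a homomorphism to the Klein four-group with `Φ e_d` and `Φ σ` distinct and nonzero, it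
takes each of its four values exactly once on these start vertices, so the paths starting in
`ker Φ` cover every edge exactly once. The evenness of `n` is what lets the weights defining `Φ`
close up around the cyclic order of the blocks.
-/

open SimpleGraph

/-- `H` divides `G`: the edge set of `G` can be partitioned into edge sets of
subgraphs of `G`, each isomorphic to `H`. -/
def GraphDivides {α β : Type} (H : SimpleGraph α) (G : SimpleGraph β) : Prop :=
  ∃ (ι : Type) (f : ι → G.Subgraph),
    (∀ i, Nonempty (H ≃g (f i).coe)) ∧
    ∀ e ∈ G.edgeSet, ∃! i, e ∈ (f i).edgeSet

/-- The `n`-dimensional hypercube graph. -/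
def cube (n : ℕ) : SimpleGraph (Fin n → ZMod 2) where
  Adj x y := hammingDist x y = 1
  symm := ⟨fun x y (h : hammingDist x y = 1) => (hammingDist_comm y x).trans h⟩
  loopless := ⟨fun x (h : hammingDist x x = 1) => by simp [hammingDist_self] at h⟩

open Finset

theorem kleinFour_exactly_one (p q : ZMod 2 × ZMod 2) (hp : p ≠ 0) (hq : q ≠ 0) (hpq : p ≠ q)
    (u : ZMod 2 × ZMod 2) :
    (u = 0 ∧ u + p ≠ 0 ∧ u + q ≠ 0 ∧ u + q + p ≠ 0) ∨
    (u ≠ 0 ∧ u + p = 0 ∧ u + q ≠ 0 ∧ u + q + p ≠ 0) ∨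
    (u ≠ 0 ∧ u + p ≠ 0 ∧ u + q = 0 ∧ u + q + p ≠ 0) ∨
    (u ≠ 0 ∧ u + p ≠ 0 ∧ u + q ≠ 0 ∧ u + q + p = 0) := by
  revert u
  revert p q
  decide

theorem existsUnique_mem_ker_of_kleinFour {J V : Type*} [AddCommGroup V]
    (Φ : V →+ ZMod 2 × ZMod 2) (j j' : J) {a b : V} (ha : Φ a ≠ 0) (hb : Φ b ≠ 0)
    (hab : Φ a ≠ Φ b) (y : V) :
    ∃! c : J × Φ.ker, (c.1 = j ∧ ((c.2 : V) = y ∨ (c.2 : V) = y + a)) ∨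
      (c.1 = j' ∧ ((c.2 : V) = y + b ∨ (c.2 : V) = y + b + a)) := by
  have hcases := kleinFour_exactly_one _ _ ha hb hab (Φ y)
  refine existsUnique_of_exists_of_unique ?_ ?_
  · rcases hcases with h | h | h | h
    · exact ⟨(j, ⟨y, h.1⟩), by simp⟩
    · exact ⟨(j, ⟨y + a, by simpa using h.2.1⟩), by simp⟩
    · exact ⟨(j', ⟨y + b, by simpa using h.2.2.1⟩), by simp⟩
    · exact ⟨(j', ⟨y + b + a, by simpa using h.2.2.2⟩), by simp⟩
  · rintro ⟨j₁, g₁, hg₁⟩ ⟨j₂, g₂, hg₂⟩ h₁ h₂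
    rw [AddMonoidHom.mem_ker] at hg₁ hg₂
    simp only [Prod.mk.injEq, Subtype.mk.injEq] at h₁ h₂ ⊢
    -- `hcases`: the four start points have pairwise distinct images under `Φ`
    rcases h₁ with ⟨rfl, rfl | rfl⟩ | ⟨rfl, rfl | rfl⟩ <;>
      rcases h₂ with ⟨rfl, rfl | rfl⟩ | ⟨rfl, rfl | rfl⟩ <;>
      simp_all

section ZModTwo

variable {V : Type*} [AddCommGroup V] [Module (ZMod 2) V]

theorem ZModModule.eq_add_iff_eq_add {x y z : V} : x = y + z ↔ y = x + z := by
  rw [← sub_eq_iff_eq_add, ZModModule.sub_eq_add, eq_comm]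

theorem Sym2.mk_add_eq_mk_add_iff {x y a b : V} :
    s(x, x + a) = s(y, y + b) ↔ a = b ∧ (x = y ∨ x + a = y) := by
  rw [Sym2.eq_iff]
  constructor
  · rintro (⟨rfl, h⟩ | ⟨rfl, h⟩)
    · exact ⟨add_left_cancel h, Or.inl rfl⟩
    · refine ⟨?_, Or.inr h⟩
      rw [add_assoc, add_eq_left, add_eq_zero_iff_eq_neg, ZModModule.neg_eq_self] at h
      exact h.symm
  · rintro ⟨rfl, rfl | rfl⟩
    · exact Or.inl ⟨rfl, rfl⟩
    · exact Or.inr ⟨by rw [add_assoc, ZModModule.add_self, add_zero], rfl⟩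

end ZModTwo

theorem hammingNorm_eq_one_iff {ι : Type*} [Fintype ι] [DecidableEq ι] {v : ι → ZMod 2} :
    hammingNorm v = 1 ↔ ∃ i, v = Pi.single i 1 := by
  have hz : ∀ z : ZMod 2, z ≠ 0 ↔ z = 1 := by decide
  have hz' : ∀ z : ZMod 2, z ≠ 1 ↔ z = 0 := by decide
  refine card_eq_one.trans (exists_congr fun i => ?_)
  simp only [Finset.ext_iff, funext_iff, mem_filter, mem_univ, true_and, mem_singleton, hz,
    Pi.single_apply]
  refine forall_congr' fun j => ?_
  split_ifs with h <;> simp [h, hz']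

theorem cube_adj_iff {n : ℕ} {x y : Fin n → ZMod 2} :
    (cube n).Adj x y ↔ ∃ i, y = x + Pi.single i 1 := by
  change hammingDist x y = 1 ↔ _
  rw [hammingDist_eq_hammingNorm, hammingNorm_eq_one_iff]
  exact exists_congr fun _ => neg_add_eq_iff_eq_add

section CubeWalk

variable {n : ℕ} (D : ℕ → Fin n)

def cubeWalk (t : ℕ) : Fin n → ZMod 2 := ∑ s ∈ range t, Pi.single (D s) 1

theorem cubeWalk_succ (t : ℕ) : cubeWalk D (t + 1) = cubeWalk D t + Pi.single (D t) 1 :=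
  sum_range_succ ..

theorem cubeWalk_add (t u : ℕ) :
    cubeWalk D (t + u) = cubeWalk D t + cubeWalk (fun s => D (t + s)) u :=
  sum_range_add ..

variable {D} {L : ℕ}

theorem cubeWalk_apply_of_injOn (hD : Set.InjOn D (Set.Iio L)) {s t : ℕ} (hs : s < L)
    (ht : t ≤ L) : cubeWalk D t (D s) = if s < t then 1 else 0 := by
  have hterm : ∀ r ∈ range t,
      (Pi.single (D r) 1 : Fin n → ZMod 2) (D s) = if s = r then 1 else 0 := fun r hr => by
    simp only [Pi.single_apply, hD.eq_iff hs ((mem_range.1 hr).trans_le ht)]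
  rw [cubeWalk, Finset.sum_apply, sum_congr rfl hterm, sum_ite_eq]
  simp only [mem_range]

theorem cubeWalk_injOn (hD : Set.InjOn D (Set.Iio L)) : Set.InjOn (cubeWalk D) (Set.Iic L) := by
  have hne : ∀ t t', t < t' → t' ≤ L → cubeWalk D t ≠ cubeWalk D t' := fun t t' htt' ht' h => by
    have := congrFun h (D t)
    rw [cubeWalk_apply_of_injOn hD (htt'.trans_le ht') (htt'.le.trans ht'),
      cubeWalk_apply_of_injOn hD (htt'.trans_le ht') ht'] at this
    simp [htt'] at this
  intro t ht t' ht' h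
  rcases lt_trichotomy t t' with hlt | rfl | hlt
  · exact absurd h (hne t t' hlt ht')
  · rfl
  · exact absurd h.symm (hne t' t hlt ht)

theorem cube_adj_cubeWalk_succ (g : Fin n → ZMod 2) (t : ℕ) :
    (cube n).Adj (g + cubeWalk D t) (g + cubeWalk D (t + 1)) :=
  cube_adj_iff.2 ⟨D t, by rw [cubeWalk_succ, add_assoc]⟩

def cubePath (hD : Set.InjOn D (Set.Iio L)) (g : Fin n → ZMod 2) :
    Copy (pathGraph (L + 1)) (cube n) where
  toHom :=
    { toFun := fun t => g + cubeWalk D t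
      map_rel' := by
        intro a b hab
        rcases pathGraph_adj.1 hab with h | h
        · simpa only [← h] using cube_adj_cubeWalk_succ g a
        · simpa only [← h] using (cube_adj_cubeWalk_succ g b).symm }
  injective' a b hab := Fin.ext <| cubeWalk_injOn hD (Nat.lt_succ_iff.1 a.2)
    (Nat.lt_succ_iff.1 b.2) (add_left_cancel hab)

theorem cubePath_edgeSet (hD : Set.InjOn D (Set.Iio L)) (g : Fin n → ZMod 2) :
    (cubePath hD g).toSubgraph.edgeSet =
      (fun t => s(g + cubeWalk D t, g + cubeWalk D (t + 1))) '' Set.Iio L := by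
  rw [Copy.toSubgraph, Subgraph.edgeSet_map, Subgraph.edgeSet_top]
  ext ε
  constructor
  · rintro ⟨ε, hε, rfl⟩
    induction ε using Sym2.ind with | _ a b =>
    rcases pathGraph_adj.1 hε with h | h <;> dsimp only at h
    · exact ⟨a, Set.mem_Iio.2 (by omega), by simp [cubePath, ← h]⟩
    · exact ⟨b, Set.mem_Iio.2 (by omega), by simp [cubePath, ← h, Sym2.eq_swap]⟩
  · rintro ⟨t, ht : t < L, rfl⟩
    exact ⟨s(⟨t, by omega⟩, ⟨t + 1, by omega⟩), pathGraph_adj.2 (Or.inl rfl), rfl⟩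

theorem mem_cubePath_edgeSet_iff (hD : Set.InjOn D (Set.Iio L)) {g x : Fin n → ZMod 2}
    {d : Fin n} : s(x, x + Pi.single d 1) ∈ (cubePath hD g).toSubgraph.edgeSet ↔
      ∃ t < L, D t = d ∧ (g = x + cubeWalk D t ∨ g = x + Pi.single d 1 + cubeWalk D t) := by
  simp only [cubePath_edgeSet, Set.mem_image, Set.mem_Iio]
  refine exists_congr fun t => and_congr_right fun _ => ?_
  rw [cubeWalk_succ, ← add_assoc, eq_comm, Sym2.mk_add_eq_mk_add_iff,
    ZModModule.eq_add_iff_eq_add, ZModModule.eq_add_iff_eq_add (x := x + _)]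
  refine and_congr_left fun _ => ⟨fun h => ?_, fun h => h ▸ rfl⟩
  simpa [Pi.single_apply, eq_comm] using congrFun h d

end CubeWalk

section Blocks

open Fin.NatCast

variable {n m k : ℕ} [NeZero m] [NeZero k] (e : Fin m × Fin k ≃ Fin n)

def blockDir (j : Fin m) (s : ℕ) : Fin n := e (j + ((s / k : ℕ) : Fin m), (s : Fin k))

theorem blockDir_of_lt (j : Fin m) {s : ℕ} (hs : s < k) : blockDir e j s = e (j, ⟨s, hs⟩) := by
  simp [blockDir, Nat.div_eq_of_lt hs, Fin.ext_iff, Nat.mod_eq_of_lt hs]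

theorem blockDir_self_add (j : Fin m) (s : ℕ) : blockDir e j (k + s) = blockDir e (j + 1) s := by
  simp [blockDir, Nat.add_div_left s (NeZero.pos k), add_assoc, add_comm (1 : Fin m)]

theorem blockDir_eq_iff {j j' : Fin m} {i : Fin k} {s : ℕ} (hs : s < 2 * k) :
    blockDir e j s = e (j', i) ↔ j = j' ∧ s = i ∨ j + 1 = j' ∧ s = k + i := by
  rcases lt_or_ge s k with h | h
  · rw [blockDir_of_lt e j h]
    simp only [e.apply_eq_iff_eq, Prod.mk.injEq, Fin.ext_iff]
    omega
  · obtain ⟨s, rfl⟩ := Nat.exists_eq_add_of_le h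
    rw [blockDir_self_add, blockDir_of_lt e _ (by omega)]
    simp only [e.apply_eq_iff_eq, Prod.mk.injEq, Fin.ext_iff]
    omega

theorem blockDir_injOn (hm : 1 < m) (j : Fin m) :
    Set.InjOn (blockDir e j) (Set.Iio (2 * k)) := by
  have hj : j + 1 ≠ j := by
    rw [Ne, add_eq_left, Fin.ext_iff, Fin.val_one', Fin.val_zero, Nat.mod_eq_of_lt hm]
    exact one_ne_zero
  intro s hs s' hs' h
  rw [Set.mem_Iio] at hs hs'
  rcases lt_or_ge s' k with h' | h'
  · rw [blockDir_of_lt e j h', blockDir_eq_iff e hs] at h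
    simp_all
  · obtain ⟨s', rfl⟩ := Nat.exists_eq_add_of_le h'
    rw [blockDir_self_add, blockDir_of_lt e _ (by omega : s' < k), blockDir_eq_iff e hs] at h
    simp_all

theorem cubeWalk_blockDir_self_add (j : Fin m) (s : ℕ) :
    cubeWalk (blockDir e j) (k + s) =
      cubeWalk (blockDir e j) k + cubeWalk (blockDir e (j + 1)) s := by
  simp only [cubeWalk_add, blockDir_self_add]

theorem mem_cubePath_blockDir_edgeSet_iff (hm : 1 < m) {x g : Fin n → ZMod 2} {j j₀ : Fin m}
    {i₀ : Fin k} :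
    s(x, x + Pi.single (e (j₀, i₀)) 1) ∈ (cubePath (blockDir_injOn e hm j) g).toSubgraph.edgeSet ↔
      (j = j₀ ∧ (g = x + cubeWalk (blockDir e j₀) i₀ ∨
          g = x + cubeWalk (blockDir e j₀) i₀ + Pi.single (e (j₀, i₀)) 1)) ∨
      (j = j₀ - 1 ∧ (g = x + cubeWalk (blockDir e j₀) i₀ + cubeWalk (blockDir e (j₀ - 1)) k ∨
          g = x + cubeWalk (blockDir e j₀) i₀ + cubeWalk (blockDir e (j₀ - 1)) k +
            Pi.single (e (j₀, i₀)) 1)) := by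
  have hwalk : cubeWalk (blockDir e (j₀ - 1)) (k + i₀) =
      cubeWalk (blockDir e (j₀ - 1)) k + cubeWalk (blockDir e j₀) i₀ := by
    rw [cubeWalk_blockDir_self_add, sub_add_cancel]
  rw [mem_cubePath_edgeSet_iff]
  constructor
  · rintro ⟨t, ht, hd, hg⟩
    rcases (blockDir_eq_iff e ht).1 hd with ⟨rfl, rfl⟩ | ⟨rfl, rfl⟩
    · exact Or.inl ⟨rfl, by simpa only [add_right_comm x] using hg⟩
    · refine Or.inr ⟨(add_sub_cancel_right _ _).symm, ?_⟩
      rw [cubeWalk_blockDir_self_add] at hg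
      simpa only [add_sub_cancel_right, add_comm, add_left_comm] using hg
  · rintro (⟨rfl, hg⟩ | ⟨rfl, hg⟩)
    · exact ⟨i₀, by omega, (blockDir_eq_iff e (by omega)).2 (Or.inl ⟨rfl, rfl⟩),
        by simpa only [add_right_comm x] using hg⟩
    · refine ⟨k + i₀, by omega,
        (blockDir_eq_iff e (by omega)).2 (Or.inr ⟨sub_add_cancel _ _, rfl⟩), ?_⟩
      simpa only [hwalk, add_comm, add_left_comm] using hg

end Blocks

section Label

variable {n m k : ℕ} [NeZero k]

/-- The leading weight `k * j` is chosen so that the weights of block `j` add up to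
`blockWeight (j + 1, 0) + (1, 0)` (`sum_blockWeight`). -/
def blockWeight (a : Fin m × Fin k) : ZMod 2 × ZMod 2 :=
  if a.2 = 0 then ((k * a.1 : ℕ), 1) else (1, 0)

def blockLabel (e : Fin m × Fin k ≃ Fin n) : (Fin n → ZMod 2) →+ ZMod 2 × ZMod 2 :=
  (Fintype.linearCombination (ZMod 2) fun i => blockWeight (e.symm i)).toAddMonoidHom

theorem blockLabel_single (e : Fin m × Fin k ≃ Fin n) (a : Fin m × Fin k) :
    blockLabel e (Pi.single (e a) 1) = blockWeight a := by
  simp [blockLabel, Fintype.linearCombination_apply_single]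

theorem blockWeight_ne_zero (a : Fin m × Fin k) : blockWeight a ≠ 0 := by
  unfold blockWeight; split_ifs <;> simp

theorem blockWeight_zero_add_ne_zero (j : Fin m) : blockWeight (j, (0 : Fin k)) + (1, 0) ≠ 0 := by
  simp [blockWeight]

theorem blockWeight_ne_blockWeight_zero_add (j : Fin m) (i : Fin k) :
    blockWeight (j, i) ≠ blockWeight (j, (0 : Fin k)) + (1, 0) := by
  unfold blockWeight; split_ifs <;> simp

theorem sum_blockWeight [NeZero m] (heven : Even (m * k)) (j : Fin m) :
    ∑ i : Fin k, blockWeight (j, i) = blockWeight (j + 1, (0 : Fin k)) + (1, 0) := by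
  rw [Fintype.sum_eq_add_sum_compl (0 : Fin k)]
  have hrest : ∀ i ∈ ({0}ᶜ : Finset (Fin k)), blockWeight (j, i) = (1, 0) := fun i hi => by
    simp [blockWeight, show i ≠ 0 by simpa using hi]
  rw [sum_congr rfl hrest, sum_const, card_compl, card_singleton, Fintype.card_fin]
  have hj : ((j + 1 : Fin m) : ℕ) = (j + 1) % m := by
    rw [Fin.val_add, Fin.val_one', Nat.add_mod_mod]
  have hdiv := congrArg (Nat.cast : ℕ → ZMod 2) (Nat.mod_add_div (j + 1) m).symm
  have hmk : ((m * k : ℕ) : ZMod 2) = 0 := heven.natCast_zmod_two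
  have hk : ((k - 1 : ℕ) : ZMod 2) = k - 1 := Nat.cast_pred (NeZero.pos k)
  have h2 : (2 : ZMod 2) = 0 := rfl
  simp only [blockWeight, if_pos, hj]
  refine Prod.ext ?_ (by simp)
  rw [Prod.fst_add, Prod.fst_add, Prod.smul_fst, nsmul_eq_mul, mul_one]
  push_cast at hdiv hmk hk ⊢
  linear_combination (k : ZMod 2) * hdiv + ((j + 1) / m : ℕ) * hmk + hk - h2

theorem blockLabel_cubeWalk_blockDir [NeZero m] (e : Fin m × Fin k ≃ Fin n)
    (heven : Even (m * k)) (j : Fin m) :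
    blockLabel e (cubeWalk (blockDir e j) k) = blockWeight (j + 1, (0 : Fin k)) + (1, 0) := by
  rw [cubeWalk, map_sum, ← Fin.sum_univ_eq_sum_range
    (fun s => blockLabel e (Pi.single (blockDir e j s) 1)), ← sum_blockWeight heven]
  refine sum_congr rfl fun i _ => ?_
  rw [blockDir_of_lt e j i.isLt, blockLabel_single]

end Label

theorem pathGraph_divides_cube_of_equiv {n m k : ℕ} [NeZero k] (hn : Even n) (hm : 1 < m)
    (e : Fin m × Fin k ≃ Fin n) : GraphDivides (pathGraph (2 * k + 1)) (cube n) := by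
  have : NeZero m := ⟨by omega⟩
  have hcard : m * k = n := by simpa using Fintype.card_congr e
  have heven : Even (m * k) := hcard ▸ hn
  refine ⟨Fin m × (blockLabel e).ker,
    fun c => (cubePath (blockDir_injOn e hm c.1) c.2).toSubgraph,
    fun c => ⟨Copy.isoToSubgraph _⟩, ?_⟩
  intro ε hε
  induction ε using Sym2.ind with | _ x y =>
  rw [mem_edgeSet] at hε
  obtain ⟨d, rfl⟩ := cube_adj_iff.1 hε
  obtain ⟨⟨j₀, i₀⟩, rfl⟩ := e.surjective d
  rw [existsUnique_congr fun c => mem_cubePath_blockDir_edgeSet_iff e hm]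
  have hq := blockLabel_cubeWalk_blockDir e heven (j₀ - 1)
  rw [sub_add_cancel] at hq
  refine existsUnique_mem_ker_of_kleinFour (blockLabel e) j₀ (j₀ - 1) ?_ ?_ ?_ _
  · rw [blockLabel_single]
    exact blockWeight_ne_zero _
  · rw [hq]
    exact blockWeight_zero_add_ne_zero _
  · rw [blockLabel_single, hq]
    exact blockWeight_ne_blockWeight_zero_add _ _

theorem path_two_k_divides_cube (n k : ℕ) (hn : Even n) (hdvd : k ∣ n) (hlt : k < n) :
    GraphDivides (pathGraph (2 * k + 1)) (cube n) := by
  obtain ⟨m, rfl⟩ := hdvd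
  have hk : 0 < k := Nat.pos_of_ne_zero fun h => by simp [h] at hlt
  have : NeZero k := ⟨hk.ne'⟩
  have hm : 1 < m := (Nat.lt_mul_iff_one_lt_right hk).1 hlt
  exact pathGraph_divides_cube_of_equiv hn hm (finProdFinEquiv.trans (finCongr (mul_comm m k)))
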